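/- arXiv:0704.0910 — 2 statements merged into one kernel-verified Lean document; each statement's English description precedes it below -/
import Mathlib

section
/- Let φ : A → B be an involutive n-homomorphism between C*-algebras with n ≥ 3 odd. Then φ is norm contractive: ‖φ(a)‖ ≤ ‖a‖ for all a ∈ A. -/
/-- Product of a nonempty list: `nuProd x [a₁, …, aₘ] = x * a₁ * ⋯ * aₘ`. -/
def nuProd {α : Type*} [Mul α] (x : α) (l : List α) : α := l.foldl (· * ·) x

/-!
For self-adjoint `h` put `u = φ h` and `r = ‖h‖`. The functional calculus gives a self-adjoint `s`
with `s² = r²ᵏ h² - h²ᵏ⁺²`. Multiplicativity of `φ` on the `n`-fold product `h²ᵏ⁻¹ s s` and on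
powers of `h` gives `r²ᵏ u⁴ᵏ - u⁶ᵏ = (φ s u²ᵏ⁻¹)⋆ (φ s u²ᵏ⁻¹) ≥ 0`, so every `t` in the spectrum
of `u` has `t⁶ᵏ ≤ r²ᵏ t⁴ᵏ`, i.e. `|t| ≤ r`; hence `‖φ h‖ ≤ ‖h‖`.

Splitting into real and imaginary parts gives `‖φ b‖ ≤ 2 ‖b‖` for all `b`. The `n`-fold product
`w b = b (b⋆ b)ᵏ` satisfies `‖w b‖ = ‖b‖ⁿ` and `φ (w b) = w (φ b)`, so iterating `w` yields
`‖φ b‖^(nᵐ) ≤ 2 ‖b‖^(nᵐ)` for every `m`, which forces `‖φ b‖ ≤ ‖b‖`.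
-/

open scoped ComplexStarModule

section Semigroup

variable {α : Type*}

/-- `powSucc x m = x ^ (m + 1)`: positive powers, which need no unit. -/
def powSucc [Mul α] (x : α) : ℕ → α
  | 0 => x
  | m + 1 => powSucc x m * x

def mulStarMulPow [Mul α] [Star α] (b : α) : ℕ → α
  | 0 => b
  | j + 1 => mulStarMulPow b j * star b * b

variable [Semigroup α]

lemma powSucc_add (x : α) (i j : ℕ) : powSucc x i * powSucc x j = powSucc x (i + j + 1) := by
  induction j with
  | zero => rfl
  | succ j ih => rw [powSucc, ← mul_assoc, ih]; rfl

lemma nuProd_append (x : α) (l₁ l₂ : List α) :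
    nuProd x (l₁ ++ l₂) = nuProd (nuProd x l₁) l₂ :=
  List.foldl_append

lemma nuProd_replicate (x : α) (m : ℕ) : nuProd x (List.replicate m x) = powSucc x m := by
  induction m with
  | zero => rfl
  | succ m ih => rw [List.replicate_succ', nuProd_append, ih]; rfl

lemma nuProd_flatten_replicate [Star α] (b : α) (j : ℕ) :
    nuProd b (List.replicate j [star b, b]).flatten = mulStarMulPow b j := by
  induction j with
  | zero => rfl
  | succ j ih => rw [List.replicate_succ', List.flatten_append, nuProd_append, ih]; rfl

lemma star_mulStarMulPow_mul_self [StarMul α] (b : α) (j : ℕ) :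
    star (mulStarMulPow b j) * mulStarMulPow b j = powSucc (star b * b) (2 * j) := by
  induction j with
  | zero => rfl
  | succ j ih =>
    calc star (mulStarMulPow b (j + 1)) * mulStarMulPow b (j + 1)
        = powSucc (star b * b) 0 * (star (mulStarMulPow b j) * mulStarMulPow b j) *
            powSucc (star b * b) 0 := by
          simp only [mulStarMulPow, powSucc, star_mul, star_star, mul_assoc]
      _ = powSucc (star b * b) (2 * (j + 1)) := by
          rw [ih, powSucc_add, powSucc_add]; congr 1; ring

end Semigroup

/-- `φ` preserves products of `m + 1` factors. -/
def PreservesNuProd {A B : Type*} [Mul A] [Mul B] (φ : A → B) (m : ℕ) : Prop :=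
  ∀ (x : A) (l : List A), l.length = m → φ (nuProd x l) = nuProd (φ x) (l.map φ)

namespace PreservesNuProd

variable {A B : Type*}

lemma of_ofFn [Mul A] [Mul B] {φ : A → B} {m : ℕ}
    (h : ∀ (x : A) (f : Fin m → A),
      φ (nuProd x (List.ofFn f)) = nuProd (φ x) (List.ofFn fun i => φ (f i))) :
    PreservesNuProd φ m := by
  rintro x l rfl
  have := h x l.get
  rwa [List.ofFn_get, List.ofFn_comp' l.get φ, List.ofFn_get] at this

variable [Semigroup A] [Semigroup B] {φ : A → B} {m m' : ℕ}

lemma add (h : PreservesNuProd φ m) (h' : PreservesNuProd φ m') :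
    PreservesNuProd φ (m + m') := by
  intro x l hl
  have h₁ : (l.take m).length = m := by rw [List.length_take]; omega
  have h₂ : (l.drop m).length = m' := by rw [List.length_drop]; omega
  rw [← List.take_append_drop m l, nuProd_append, List.map_append, nuProd_append, h' _ _ h₂,
    h _ _ h₁]

lemma map_powSucc (h : PreservesNuProd φ m) (x : A) : φ (powSucc x m) = powSucc (φ x) m := by
  simpa only [nuProd_replicate, List.map_replicate] using h x (List.replicate m x) (by simp)

lemma map_mulStarMulPow [StarMul A] [StarMul B] {j : ℕ} (h : PreservesNuProd φ (2 * j))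
    (hstar : ∀ a, φ (star a) = star (φ a)) (b : A) :
    φ (mulStarMulPow b j) = mulStarMulPow (φ b) j := by
  have hlen : ((List.replicate j [star b, b]).flatten).length = 2 * j := by simp [mul_comm]
  rw [← nuProd_flatten_replicate, h _ _ hlen, ← nuProd_flatten_replicate]
  simp [List.map_flatten, List.map_replicate, hstar]

end PreservesNuProd

section CStarAlgebra

open NonUnitalIsometricContinuousFunctionalCalculus

variable {E : Type*} [NonUnitalCStarAlgebra E]

lemma IsSelfAdjoint.cfcₙ_pow_succ {a : E} (ha : IsSelfAdjoint a) (m : ℕ) :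
    cfcₙ (· ^ (m + 1) : ℝ → ℝ) a = powSucc a m := by
  induction m with
  | zero => simp only [zero_add, pow_one]; exact cfcₙ_id' ℝ a
  | succ m ih =>
    calc cfcₙ (· ^ (m + 2) : ℝ → ℝ) a = cfcₙ (fun t : ℝ => t ^ (m + 1) * t) a := by
          simp only [pow_succ]
      _ = powSucc a (m + 1) := by rw [cfcₙ_mul _ _ a, ih, cfcₙ_id' ℝ a]; rfl

lemma isSelfAdjoint_powSucc {a : E} (ha : IsSelfAdjoint a) (m : ℕ) :
    IsSelfAdjoint (powSucc a m) :=
  ha.cfcₙ_pow_succ m ▸ cfcₙ_predicate _ a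

lemma IsSelfAdjoint.norm_powSucc {a : E} (ha : IsSelfAdjoint a) (m : ℕ) :
    ‖powSucc a m‖ = ‖a‖ ^ (m + 1) := by
  rw [← ha.cfcₙ_pow_succ]
  refine le_antisymm (norm_cfcₙ_le fun t ht => ?_) ?_
  · rw [norm_pow]
    exact pow_le_pow_left₀ (norm_nonneg t) (norm_quasispectrum_le a ht) _
  · obtain ⟨t, ht, htn⟩ := (isGreatest_norm_quasispectrum (𝕜 := ℝ) a).1
    simpa only [norm_pow, htn] using norm_apply_le_norm_cfcₙ (· ^ (m + 1) : ℝ → ℝ) a ht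

lemma norm_mulStarMulPow (b : E) (j : ℕ) : ‖mulStarMulPow b j‖ = ‖b‖ ^ (2 * j + 1) := by
  have h : ‖mulStarMulPow b j‖ * ‖mulStarMulPow b j‖ = ‖b‖ ^ (2 * j + 1) * ‖b‖ ^ (2 * j + 1) := by
    rw [← CStarRing.norm_star_mul_self, star_mulStarMulPow_mul_self,
      IsSelfAdjoint.norm_powSucc (.star_mul_self b), CStarRing.norm_star_mul_self, mul_pow]
  exact (mul_self_inj (norm_nonneg _) (by positivity)).mp h

lemma IsSelfAdjoint.exists_mul_self_eq_sub {h : E} (hh : IsSelfAdjoint h) (j : ℕ) :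
    ∃ s : E, IsSelfAdjoint s ∧
      s * s = ‖h‖ ^ (2 * j) • powSucc h 1 - powSucc h (2 * j + 1) := by
  refine ⟨cfcₙ (fun t : ℝ => t * √(‖h‖ ^ (2 * j) - t ^ (2 * j))) h, cfcₙ_predicate _ h, ?_⟩
  rw [← cfcₙ_mul .., ← hh.cfcₙ_pow_succ, ← hh.cfcₙ_pow_succ, ← cfcₙ_const_mul .., ← cfcₙ_sub ..]
  refine cfcₙ_congr fun t ht => ?_
  have hle : t ^ (2 * j) ≤ ‖h‖ ^ (2 * j) := by
    rw [pow_mul, pow_mul, ← sq_abs]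
    exact pow_le_pow_left₀ (sq_nonneg _)
      (pow_le_pow_left₀ (abs_nonneg t) (norm_quasispectrum_le h ht) 2) _
  have hsq := Real.mul_self_sqrt (sub_nonneg.mpr hle)
  linear_combination t ^ 2 * hsq

lemma IsSelfAdjoint.norm_le_of_nonneg_smul_sub [PartialOrder E] [StarOrderedRing E] {u : E}
    (hu : IsSelfAdjoint u) {r : ℝ} (hr : 0 ≤ r) {i j : ℕ} (hj : j ≠ 0)
    (h : 0 ≤ r ^ (2 * j) • powSucc u (2 * i + 1) - powSucc u (2 * i + 2 * j + 1)) :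
    ‖u‖ ≤ r := by
  rw [← hu.cfcₙ_pow_succ, ← hu.cfcₙ_pow_succ, ← cfcₙ_const_mul .., ← cfcₙ_sub ..,
    cfcₙ_nonneg_iff ..] at h
  rw [← cfcₙ_id' ℝ u]
  refine norm_cfcₙ_le fun t ht => ?_
  by_contra! hlt
  rw [Real.norm_eq_abs] at hlt
  have ht0 : t ≠ 0 := abs_pos.mp (hr.trans_lt hlt)
  have hpos : 0 < t ^ (2 * i + 1 + 1) := Even.pow_pos ⟨i + 1, by ring⟩ ht0
  have hlt' : r ^ (2 * j) < t ^ (2 * j) := by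
    rw [← Even.pow_abs ⟨j, two_mul j⟩ t]
    exact pow_lt_pow_left₀ hlt hr (by omega)
  have hsplit : t ^ (2 * i + 2 * j + 1 + 1) = t ^ (2 * j) * t ^ (2 * i + 1 + 1) := by ring
  linarith [h t ht, mul_lt_mul_of_pos_right hlt' hpos]

end CStarAlgebra

lemma IsSelfAdjoint.norm_map_le {A B : Type*} [NonUnitalCStarAlgebra A] [NonUnitalCStarAlgebra B]
    {φ : A →ₗ[ℂ] B} {k : ℕ} (hk : k ≠ 0) (hφ : PreservesNuProd φ (2 * k))
    (hstar : ∀ a, φ (star a) = star (φ a)) {h : A} (hh : IsSelfAdjoint h) : ‖φ h‖ ≤ ‖h‖ := by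
  let _ := CStarAlgebra.spectralOrder B
  have : StarOrderedRing B := CStarAlgebra.spectralOrderedRing B
  have hφsa : ∀ {a : A}, IsSelfAdjoint a → IsSelfAdjoint (φ a) := fun ha => by
    rw [IsSelfAdjoint, ← hstar, ha.star_eq]
  obtain ⟨s, hs, hss⟩ := hh.exists_mul_self_eq_sub k
  set Y := powSucc (φ h) (2 * k - 2)
  have hY : IsSelfAdjoint Y := isSelfAdjoint_powSucc (hφsa hh) _
  have hprod : φ (powSucc h (2 * k - 2) * s * s) = Y * φ s * φ s := by
    have hlen : (List.replicate (2 * k - 2) h ++ [s, s]).length = 2 * k := by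
      simp only [List.length_append, List.length_replicate, List.length_cons, List.length_nil]
      omega
    have hmap := hφ h _ hlen
    rwa [nuProd_append, nuProd_replicate, List.map_append, List.map_replicate, nuProd_append,
      nuProd_replicate] at hmap
  have hpoly : powSucc h (2 * k - 2) * s * s =
      ‖h‖ ^ (2 * k) • powSucc h (2 * k) - powSucc h (2 * k + 2 * k) := by
    rw [mul_assoc, hss, mul_sub, mul_smul_comm, powSucc_add, powSucc_add,
      show 2 * k - 2 + 1 + 1 = 2 * k by omega,
      show 2 * k - 2 + (2 * k + 1) + 1 = 2 * k + 2 * k by omega]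
  have key : ‖h‖ ^ (2 * k) • powSucc (φ h) (2 * (2 * k - 1) + 1) -
      powSucc (φ h) (2 * (2 * k - 1) + 2 * k + 1) = star (φ s * Y) * (φ s * Y) := by
    calc _ = φ (‖h‖ ^ (2 * k) • powSucc h (2 * k) - powSucc h (2 * k + 2 * k)) * Y := by
          rw [map_sub, φ.map_smul_of_tower, hφ.map_powSucc, (hφ.add hφ).map_powSucc, sub_mul,
            smul_mul_assoc, powSucc_add, powSucc_add]
          congr 3 <;> omega
      _ = star (φ s * Y) * (φ s * Y) := by
          rw [← hpoly, hprod, star_mul, (hφsa hs).star_eq, hY.star_eq]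
          simp only [mul_assoc]
  exact (hφsa hh).norm_le_of_nonneg_smul_sub (norm_nonneg h) hk (key ▸ star_mul_self_nonneg _)

section RealImaginaryPart

variable {A : Type*} [SeminormedAddCommGroup A] [NormedSpace ℂ A] [StarAddMonoid A]
  [NormedStarGroup A] [StarModule ℂ A]

lemma norm_realPart_le (a : A) : ‖(ℜ a : A)‖ ≤ ‖a‖ := by
  rw [realPart_apply_coe, norm_smul]
  calc ‖(2⁻¹ : ℝ)‖ * ‖a + star a‖ ≤ 2⁻¹ * (‖a‖ + ‖star a‖) := by
        rw [Real.norm_of_nonneg (by norm_num)]; gcongr; exact norm_add_le _ _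
    _ = ‖a‖ := by rw [norm_star]; ring

lemma norm_imaginaryPart_le (a : A) : ‖(ℑ a : A)‖ ≤ ‖a‖ := by
  simpa [realPart_I_smul, norm_smul] using norm_realPart_le (Complex.I • a)

lemma norm_map_le_two_mul {B : Type*} [SeminormedAddCommGroup B] [NormedSpace ℂ B]
    {φ : A →ₗ[ℂ] B} (hφ : ∀ a, IsSelfAdjoint a → ‖φ a‖ ≤ ‖a‖) (b : A) : ‖φ b‖ ≤ 2 * ‖b‖ :=
  calc ‖φ b‖ = ‖φ (ℜ b) + Complex.I • φ (ℑ b)‖ := by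
        rw [← map_smul, ← map_add, realPart_add_I_smul_imaginaryPart]
    _ ≤ ‖φ (ℜ b)‖ + ‖φ (ℑ b)‖ := by
        simpa [norm_smul] using norm_add_le (φ (ℜ b)) (Complex.I • φ (ℑ b))
    _ ≤ ‖b‖ + ‖b‖ := add_le_add ((hφ _ (ℜ b).2).trans (norm_realPart_le b))
        ((hφ _ (ℑ b).2).trans (norm_imaginaryPart_le b))
    _ = 2 * ‖b‖ := (two_mul _).symm

end RealImaginaryPart

open Filter in
lemma le_of_pow_le_mul_pow {x y C : ℝ} (hy : 0 ≤ y) {N : ℕ → ℕ} (hN : Tendsto N atTop atTop)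
    (h : ∀ m, x ^ N m ≤ C * y ^ N m) : x ≤ y := by
  by_contra! hlt
  have hx : 0 < x := hy.trans_lt hlt
  have hsmall : ∀ᶠ n : ℕ in atTop, C * (y / x) ^ n < 1 := by
    have := (tendsto_pow_atTop_nhds_zero_of_lt_one (div_nonneg hy hx.le)
      ((div_lt_one hx).mpr hlt)).const_mul C
    rw [mul_zero] at this
    exact this.eventually (gt_mem_nhds one_pos)
  obtain ⟨m, hm⟩ := (hN.eventually hsmall).exists
  have := h m
  rw [div_pow, mul_div_assoc', div_lt_one (pow_pos hx _)] at hm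
  linarith

lemma norm_le_of_norm_pow {E F : Type*} [SeminormedAddGroup E] [Norm F] {f : E → F} {g : E → E}
    {N : ℕ} (hN : 2 ≤ N) {C : ℝ} (hC : ∀ x, ‖f x‖ ≤ C * ‖x‖) (hg : ∀ x, ‖g x‖ = ‖x‖ ^ N)
    (hfg : ∀ x, ‖f (g x)‖ = ‖f x‖ ^ N) (x : E) : ‖f x‖ ≤ ‖x‖ := by
  have hiter : ∀ m, ‖f (g^[m] x)‖ = ‖f x‖ ^ N ^ m ∧ ‖g^[m] x‖ = ‖x‖ ^ N ^ m := by
    intro m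
    induction m with
    | zero => simp
    | succ m ih =>
      simp only [Function.iterate_succ_apply', hfg, hg, ih, pow_succ, pow_mul, and_self]
  refine le_of_pow_le_mul_pow (C := C) (norm_nonneg x) (tendsto_pow_atTop_atTop_of_one_lt hN)
    fun m => ?_
  rw [← (hiter m).1, ← (hiter m).2]
  exact hC _

/-- An involutive `n`-homomorphism between (possibly nonunital) C*-algebras with
`n = 2k+1 ≥ 3` odd is norm contractive. -/
theorem odd_nhom_contractive {A B : Type*}
    [NonUnitalNormedRing A] [StarRing A] [CStarRing A] [CompleteSpace A]
    [NormedSpace ℂ A] [IsScalarTower ℂ A A] [SMulCommClass ℂ A A] [StarModule ℂ A]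
    [NonUnitalNormedRing B] [StarRing B] [CStarRing B] [CompleteSpace B]
    [NormedSpace ℂ B] [IsScalarTower ℂ B B] [SMulCommClass ℂ B B] [StarModule ℂ B]
    (k : ℕ) (hk : 1 ≤ k) (φ : A →ₗ[ℂ] B)
    (hmul : ∀ (x : A) (f : Fin (2 * k) → A),
      φ (nuProd x (List.ofFn f)) = nuProd (φ x) (List.ofFn fun i => φ (f i)))
    (hstar : ∀ a : A, φ (star a) = star (φ a)) :
    ∀ a : A, ‖φ a‖ ≤ ‖a‖ := by
  let _ : NonUnitalCStarAlgebra A := {}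
  let _ : NonUnitalCStarAlgebra B := {}
  have hφ : PreservesNuProd φ (2 * k) := .of_ofFn hmul
  have hsa : ∀ h : A, IsSelfAdjoint h → ‖φ h‖ ≤ ‖h‖ := fun h hh =>
    hh.norm_map_le (by omega) hφ hstar
  exact norm_le_of_norm_pow (g := (mulStarMulPow · k)) (N := 2 * k + 1) (by omega)
    (norm_map_le_two_mul hsa) (norm_mulStarMulPow · k)
    (fun b => by rw [hφ.map_mulStarMulPow hstar, norm_mulStarMulPow])
end

section
/- Let A be a unital algebra, φ : A → B an n-homomorphism with n ≥ 3, and ψ(a) := φ(1)^{n-2}φ(a) the associated homomorphism. If a = a₁a₂⋯aₙ then ψ(a) = φ(a₁a₂)φ(a₃)⋯φ(aₙ). -/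
/-!
`B` has no unit, so `φ(1)^k` only exists as an iterated product. Embedding `B` into the monoid
`WithOne B` turns both sides into honest monoid products. There, `φ(a₁a₂) = φ(1)^(n-2) φ(a₁) φ(a₂)`
(apply the `n`-homomorphism property to `1 ⋯ 1 · a₁ · a₂`) and `φ(a) = φ(a₁) ⋯ φ(aₙ)`, so both
sides equal `φ(1)^(n-2) φ(a₁) ⋯ φ(aₙ)`.
-/

namespace WithOne

variable {α : Type*} [Semigroup α]

theorem coe_nuProd (x : α) (l : List α) :
    ((nuProd x l : α) : WithOne α) = x * (l.map (↑)).prod := by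
  induction l generalizing x with
  | nil => simp [nuProd]
  | cons a l ih =>
    change ((nuProd (x * a) l : α) : WithOne α) = _
    rw [ih, List.map_cons, List.prod_cons, coe_mul, mul_assoc]

theorem coe_foldr_replicate (k : ℕ) (e b : α) :
    (((List.replicate k e).foldr (· * ·) b : α) : WithOne α) = (e : WithOne α) ^ k * b := by
  induction k with
  | zero => simp
  | succ k ih => rw [List.replicate_succ, List.foldr_cons, coe_mul, ih, pow_succ', mul_assoc]

end WithOne

/-- If `A` is unital, `φ : A → B` an `n`-homomorphism (`n ≥ 3`), and
`ψ(a) := φ(1)^(n-2) φ(a)`, then whenever `a = a₁a₂⋯aₙ`, one has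
`ψ(a) = φ(a₁a₂) φ(a₃) ⋯ φ(aₙ)`. -/
theorem unital_nhom_psi_formula {A B : Type*}
    [Ring A] [Algebra ℂ A]
    [NonUnitalRing B] [Module ℂ B]
    (n : ℕ) (hn : 3 ≤ n) (φ : A →ₗ[ℂ] B)
    (hmul : ∀ (x : A) (f : Fin (n - 1) → A),
      φ (x * (List.ofFn f).prod) = nuProd (φ x) (List.ofFn fun i => φ (f i))) :
    ∀ (a : A) (f : Fin n → A), a = (List.ofFn f).prod →
      (List.replicate (n - 2) (φ 1)).foldr (· * ·) (φ a)
        = nuProd (φ (f ⟨0, by omega⟩ * f ⟨1, by omega⟩))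
            (List.ofFn fun i : Fin (n - 2) => φ (f ⟨i.val + 2, by omega⟩)) := by
  obtain ⟨m, rfl⟩ : ∃ m, n = m + 3 := ⟨n - 3, by omega⟩
  rintro a f rfl
  have hmul' : ∀ (x : A) (g : Fin (m + 2) → A),
      φ (x * (List.ofFn g).prod) = nuProd (φ x) (List.ofFn fun i => φ (g i)) := hmul
  have h_prod : φ (List.ofFn f).prod
      = nuProd (φ (f 0)) (φ (f 1) :: List.ofFn fun i : Fin (m + 1) => φ (f ⟨i + 2, by omega⟩)) := by
    rw [List.ofFn_succ, List.prod_cons, hmul', List.ofFn_succ]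
    rfl
  have h_pair : φ (f ⟨0, by omega⟩ * f ⟨1, by omega⟩)
      = nuProd (φ 1) (List.replicate m (φ 1) ++ [φ (f 0), φ (f 1)]) := by
    set g : Fin (m + 2) → A := Fin.append (fun _ : Fin m => 1) ![f 0, f 1]
    have h_ofFn : List.ofFn g = List.replicate m 1 ++ [f 0, f 1] := by
      rw [List.ofFn_fin_append]
      simp
    have h_hom := hmul' 1 g
    rw [List.ofFn_comp' g φ, h_ofFn] at h_hom
    simpa using h_hom
  apply WithOne.coe_injective
  rw [WithOne.coe_foldr_replicate, h_prod, WithOne.coe_nuProd, WithOne.coe_nuProd, h_pair,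
    WithOne.coe_nuProd]
  simp [pow_succ', mul_assoc]
end
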